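/- arXiv:2303.12850 — 2 statements merged into one kernel-verified Lean document; each statement's English description precedes it below -/
import Mathlib

section
/- Let G=(V,E) be a finite undirected graph with nonnegative vertex costs c : V → ℝ_{≥0}. The integrality gap of the LP relaxation min{Σ_{u∈V} c_u x_u : x ∈ P_WD(G)} of the pseudoforest deletion set problem is at most 3: for every x ∈ P_WD(G), there exists a pseudoforest deletion set U ⊆ V such that Σ_{u∈U} c(u) ≤ 3 · Σ_{u∈V} c(u) x_u. -/
/- Common definitions for the polyhedral study of FVS / PFDS. -/

open scoped Classical
open Finset

namespace FVS

noncomputable section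

variable {V : Type*}

/-- Degree of `u` in the subgraph of `G` induced on the vertex set `S`. -/
def degIn [Fintype V] (G : SimpleGraph V) (S : Finset V) (u : V) : ℕ :=
  (S.filter fun v => G.Adj u v).card

/-- Number of edges of `G` with both endpoints in `S`, i.e. `|E[S]|`. -/
def edgesIn [Fintype V] (G : SimpleGraph V) (S : Finset V) : ℕ :=
  (G.edgeFinset.filter fun e => ∀ v ∈ e, v ∈ S).card

/-- A finite graph is a pseudoforest if each connected component has at most as many
edges as vertices. -/
def IsPseudoforest {W : Type*} [Fintype W] (H : SimpleGraph W) : Prop :=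
  ∀ C : H.ConnectedComponent,
    (H.edgeFinset.filter fun e => ∀ v ∈ e, H.connectedComponentMk v = C).card ≤
      (Finset.univ.filter fun v => H.connectedComponentMk v = C).card

/-- `U` is a pseudoforest deletion set for `G`: `G - U` is a pseudoforest. -/
def IsPFDS [Fintype V] (G : SimpleGraph V) (U : Finset V) : Prop :=
  IsPseudoforest (G.induce {v : V | v ∉ U})

/-- `F` is a feedback vertex set for `G`: `G - F` is acyclic. -/
def IsFVS [Fintype V] (G : SimpleGraph V) (F : Finset V) : Prop :=
  (G.induce {v : V | v ∉ F}).IsAcyclic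

/-- Membership in the orientation polyhedron `P_orient(G)`: for every edge `e = uv`,
`x_u + x_v + y_{e,u} + y_{e,v} ≥ 1`; for every vertex `u`,
`x_u + Σ_{e ∈ δ(u)} y_{e,u} ≤ 1`; and all variables are nonnegative.  The variables
`y e u` for pairs `(e, u)` where `e` is not an edge of `G` or `u` is not an endpoint
of `e` do not occur in the formulation and are pinned to `0`. -/
def POrient [Fintype V] (G : SimpleGraph V) (x : V → ℝ) (y : Sym2 V → V → ℝ) : Prop :=
  (∀ u v, G.Adj u v → 1 ≤ x u + x v + y s(u, v) u + y s(u, v) v) ∧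
  (∀ u, x u + ∑ e ∈ G.edgeFinset.filter (fun e => u ∈ e), y e u ≤ 1) ∧
  (∀ u, 0 ≤ x u) ∧
  (∀ e u, 0 ≤ y e u) ∧
  (∀ e u, ¬ (e ∈ G.edgeSet ∧ u ∈ e) → y e u = 0)

/-- Membership in `Q_orient(G)`, the projection of `P_orient(G)` to the `x`-variables. -/
def QOrient [Fintype V] (G : SimpleGraph V) (x : V → ℝ) : Prop :=
  ∃ y : Sym2 V → V → ℝ, POrient G x y

/-- Membership in the weak density polyhedron `P_WD(G)`:
`x ≥ 0` and `Σ_{u ∈ S} (d_S(u) - 1) x_u ≥ |E[S]| - |S|` for every `S ⊆ V`. -/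
def PWD [Fintype V] (G : SimpleGraph V) (x : V → ℝ) : Prop :=
  (∀ u, 0 ≤ x u) ∧
  ∀ S : Finset V, (edgesIn G S : ℝ) - S.card ≤ ∑ u ∈ S, ((degIn G S u : ℝ) - 1) * x u

/-- Membership in the strong density polyhedron `P_SD(G)`:
`x ≥ 0` and `Σ_{u ∈ S} (d_S(u) - 1) x_u ≥ |E[S]| - |S| + 1` whenever `E[S] ≠ ∅`. -/
def PSD [Fintype V] (G : SimpleGraph V) (x : V → ℝ) : Prop :=
  (∀ u, 0 ≤ x u) ∧
  ∀ S : Finset V, edgesIn G S ≠ 0 →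
    (edgesIn G S : ℝ) - S.card + 1 ≤ ∑ u ∈ S, ((degIn G S u : ℝ) - 1) * x u

/-- The induced subgraph `G[U]` is a cycle: it is connected and `2`-regular. -/
def IsInducedCycle [Fintype V] (G : SimpleGraph V) (U : Finset V) : Prop :=
  (G.induce (U : Set V)).Connected ∧ ∀ u ∈ U, degIn G U u = 2

/-- Membership in the cycle cover polyhedron `P_cycle-cover(G)`. -/
def PCycleCover [Fintype V] (G : SimpleGraph V) (x : V → ℝ) : Prop :=
  (∀ u, 0 ≤ x u) ∧ ∀ U : Finset V, IsInducedCycle G U → 1 ≤ ∑ u ∈ U, x u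

/-- The induced subgraph `G[U]` is a `2`-pseudotree: connected with at least `|U| + 1` edges. -/
def Is2PseudotreeInduced [Fintype V] (G : SimpleGraph V) (U : Finset V) : Prop :=
  (G.induce (U : Set V)).Connected ∧ U.card + 1 ≤ edgesIn G U

/-- Membership in the `2`-pseudotree cover polyhedron `P_2PT-cover(G)`. -/
def P2PTCover [Fintype V] (G : SimpleGraph V) (x : V → ℝ) : Prop :=
  (∀ u, 0 ≤ x u) ∧ ∀ U : Finset V, Is2PseudotreeInduced G U → 1 ≤ ∑ u ∈ U, x u

/-- `(x, y)` is an extreme point of `P_orient(G)`: it is feasible and is not a proper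
convex combination of two distinct points of `P_orient(G)`. -/
def POrientExtreme [Fintype V] (G : SimpleGraph V) (x : V → ℝ) (y : Sym2 V → V → ℝ) : Prop :=
  POrient G x y ∧
    ∀ (x₁ x₂ : V → ℝ) (y₁ y₂ : Sym2 V → V → ℝ) (t : ℝ),
      POrient G x₁ y₁ → POrient G x₂ y₂ → 0 < t → t < 1 →
      (∀ v, x v = t * x₁ v + (1 - t) * x₂ v) →
      (∀ e u, y e u = t * y₁ e u + (1 - t) * y₂ e u) →
      x₁ = x₂ ∧ y₁ = y₂

/-- `(x, y)` is a minimal point of `P_orient(G)`: decreasing any single coordinate by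
any `ε > 0`, keeping the other coordinates unchanged, yields a point outside the
polyhedron. -/
def POrientMinimal [Fintype V] (G : SimpleGraph V) (x : V → ℝ) (y : Sym2 V → V → ℝ) : Prop :=
  (∀ v, ∀ ε : ℝ, 0 < ε → ¬ POrient G (Function.update x v (x v - ε)) y) ∧
  (∀ e u, ∀ ε : ℝ, 0 < ε →
    ¬ POrient G x (fun e' u' => if e' = e ∧ u' = u then y e u - ε else y e' u'))

/-- `x` is an extreme point of `P_WD(G)`: it is feasible and is not a proper convex
combination of two distinct points of `P_WD(G)`. -/
def PWDExtreme [Fintype V] (G : SimpleGraph V) (x : V → ℝ) : Prop :=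
  PWD G x ∧
    ∀ (x₁ x₂ : V → ℝ) (t : ℝ), PWD G x₁ → PWD G x₂ → 0 < t → t < 1 →
      (∀ v, x v = t * x₁ v + (1 - t) * x₂ v) → x₁ = x₂

/-- The support graph `H(y)`: the bipartite graph on `V(G) ⊕ E(G)` joining a vertex `v`
to an edge `e` whenever `v` is an endpoint of the edge `e` of `G` and `y e v > 0`. -/
def supportGraph [Fintype V] (G : SimpleGraph V) (y : Sym2 V → V → ℝ) :
    SimpleGraph (V ⊕ Sym2 V) :=
  SimpleGraph.fromRel fun a b =>
    ∃ v e, a = Sum.inl v ∧ b = Sum.inr e ∧ e ∈ G.edgeSet ∧ v ∈ e ∧ 0 < y e v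

/-- The edge `e` lies on some cycle of `G`. -/
def OnCycle (G : SimpleGraph V) (e : Sym2 V) : Prop :=
  ∃ (u : V) (w : G.Walk u u), w.IsCycle ∧ e ∈ w.edges

/-- `G` has a semi-disjoint cycle: a cycle containing at most one vertex whose degree
in `G` is strictly larger than `2`. -/
def HasSemiDisjointCycle [Fintype V] (G : SimpleGraph V) : Prop :=
  ∃ (u : V) (w : G.Walk u u), w.IsCycle ∧
    (w.support.toFinset.filter fun v => 2 < G.degree v).card ≤ 1

/-- The set `δ(F, V - F)` of edges of `G` with exactly one endpoint in `F`. -/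
def cutEdges [Fintype V] (G : SimpleGraph V) (F : Finset V) : Finset (Sym2 V) :=
  G.edgeFinset.filter fun e => ∃ u v, e = s(u, v) ∧ u ∈ F ∧ v ∉ F

/-- The function `f_x(S) = |E[S]| - |S| - Σ_{u ∈ S} (d_S(u) - 1) x_u`. -/
def fWD [Fintype V] (G : SimpleGraph V) (x : V → ℝ) (S : Finset V) : ℝ :=
  (edgesIn G S : ℝ) - S.card - ∑ u ∈ S, ((degIn G S u : ℝ) - 1) * x u

/-- The row vector `row(S)` of the weak density constraint for the set `S`:
its coordinate at `u` is `d_S(u) - 1` if `u ∈ S` and `0` otherwise. -/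
def rowWD [Fintype V] (G : SimpleGraph V) (S : Finset V) (u : V) : ℝ :=
  if u ∈ S then (degIn G S u : ℝ) - 1 else 0

/-- The constraints (orientation), (load), (cumulative) and nonnegativity of the
purely orientation-based ILP formulation for FVS, with one copy `y f` of the
orientation variables for each edge `f` of `G`:
* `x_v + x_w + y^f_{e,v} + y^f_{e,w} ≥ 1` for all edges `e = vw` and all `f ∈ E`;
* `x_v + Σ_{e = vw ∈ E} y^f_{e,w} ≥ 1` for all `v ∈ V` and all `f ∈ E`;
* `Σ_{v ∈ V - {a,b}} x_v + Σ_{e = vw ∈ E - {f}} (y^f_{e,w} + y^f_{e,v}) ≤ |V| - 2`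
  for all `f = ab ∈ E`; and all variables nonnegative. -/
def OrientSD [Fintype V] (G : SimpleGraph V) (x : V → ℝ)
    (y : Sym2 V → Sym2 V → V → ℝ) : Prop :=
  (∀ f ∈ G.edgeSet, ∀ v w, G.Adj v w →
    1 ≤ x v + x w + y f s(v, w) v + y f s(v, w) w) ∧
  (∀ f ∈ G.edgeSet, ∀ v : V, 1 ≤ x v + ∑ w ∈ G.neighborFinset v, y f s(v, w) w) ∧
  (∀ a b : V, G.Adj a b →
    (∑ v ∈ Finset.univ \ {a, b}, x v) +
      (∑ e ∈ G.edgeFinset.erase s(a, b),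
        ∑ u ∈ Finset.univ.filter (fun u => u ∈ e), y s(a, b) e u)
      ≤ (Fintype.card V : ℝ) - 2) ∧
  (∀ u, 0 ≤ x u) ∧ (∀ f e u, 0 ≤ y f e u)

end
end FVS

/-!
Local ratio on `2`-cores. Call `A ⊆ V` sparse if every `T ⊆ A` spans at most `|T|` edges; `G - U`
is a pseudoforest when `V \ U` is sparse. If `A` is not sparse, let `B` be its `2`-core and give
each `v ∈ B` the weight `d_B(v) - 1`. For every inclusion-minimal `U ⊆ A` leaving `A \ U` sparse,
counting the edges between `U ∩ B` and the components of `G[B \ U]` shows that `U` has weight at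
most `3 (|E[B]| - |B|)`, which the weak density constraint for `B` bounds by `3` times the weight
of `x`. Subtracting from `c` the largest multiple of these weights makes some vertex free, and
induction on `A` finishes the argument.
-/

namespace FVS

noncomputable section

variable {V : Type*} [Fintype V] (G : SimpleGraph V)

section EdgeCount

lemma degIn_mono {S T : Finset V} (h : S ⊆ T) (u : V) : degIn G S u ≤ degIn G T u :=
  card_le_card (filter_subset_filter _ h)

@[simp]
lemma degIn_empty (u : V) : degIn G ∅ u = 0 := by
  simp [degIn]

lemma degIn_union {S T : Finset V} (h : Disjoint S T) (u : V) :
    degIn G (S ∪ T) u = degIn G S u + degIn G T u := by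
  rw [degIn, filter_union, card_union_of_disjoint (disjoint_filter_filter h)]
  rfl

lemma degIn_insert_self (S : Finset V) (a : V) : degIn G (insert a S) a = degIn G S a := by
  rw [degIn, filter_insert, if_neg (G.loopless.irrefl a)]
  rfl

lemma degIn_erase_self (S : Finset V) (a : V) : degIn G (S.erase a) a = degIn G S a := by
  rw [degIn, filter_erase, erase_eq_of_notMem (fun h => G.loopless.irrefl a (mem_filter.1 h).2)]
  rfl

lemma degIn_insert_of_notMem {S : Finset V} {a : V} (ha : a ∉ S) (v : V) :
    degIn G (insert a S) v = degIn G S v + if G.Adj v a then 1 else 0 := by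
  rw [degIn, filter_insert]
  split
  · rw [card_insert_of_notMem (fun h => ha (mem_of_mem_filter _ h))]
    rfl
  · rfl

lemma sum_degIn_comm (S T : Finset V) : ∑ u ∈ S, degIn G T u = ∑ v ∈ T, degIn G S v := by
  simp_rw [degIn, card_filter]
  rw [sum_comm]
  simp [G.adj_comm]

@[simp]
lemma edgesIn_empty : edgesIn G (∅ : Finset V) = 0 := by
  rw [edgesIn, card_eq_zero, filter_eq_empty_iff]
  exact fun e _ h => notMem_empty _ (h _ e.out_fst_mem)

lemma edgesIn_insert {S : Finset V} {a : V} (ha : a ∉ S) :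
    edgesIn G (insert a S) = edgesIn G S + degIn G S a := by
  rw [edgesIn, ← card_filter_add_card_filter_not (p := fun e => a ∉ e), filter_filter,
    filter_filter]
  have hold : G.edgeFinset.filter (fun e => (∀ v ∈ e, v ∈ insert a S) ∧ a ∉ e)
      = G.edgeFinset.filter (fun e => ∀ v ∈ e, v ∈ S) := by
    refine filter_congr fun e _ => ⟨fun ⟨h, hae⟩ v hv => ?_, fun h => ⟨?_, fun hae => ha (h a hae)⟩⟩
    · exact (mem_insert.mp (h v hv)).resolve_left (by rintro rfl; exact hae hv)
    · exact fun v hv => mem_insert_of_mem (h v hv)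
  have hnew : G.edgeFinset.filter (fun e => (∀ v ∈ e, v ∈ insert a S) ∧ ¬a ∉ e)
      = (S.filter (G.Adj a)).image (fun v => s(a, v)) := by
    ext e
    induction e with
    | _ u v =>
      simp only [mem_filter, SimpleGraph.mem_edgeFinset, SimpleGraph.mem_edgeSet, Sym2.mem_iff,
        mem_insert, mem_image, Sym2.eq_iff, not_not]
      constructor
      · rintro ⟨huv, h, rfl | rfl⟩
        · exact ⟨v, ⟨(h v (.inr rfl)).resolve_left huv.ne', huv⟩, .inl ⟨rfl, rfl⟩⟩
        · exact ⟨u, ⟨(h u (.inl rfl)).resolve_left huv.ne, huv.symm⟩, .inr ⟨rfl, rfl⟩⟩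
      · rintro ⟨w, ⟨hw, haw⟩, ⟨rfl, rfl⟩ | ⟨rfl, rfl⟩⟩
        · exact ⟨haw, by rintro _ (rfl | rfl) <;> simp [hw], .inl rfl⟩
        · exact ⟨haw.symm, by rintro _ (rfl | rfl) <;> simp [hw], .inr rfl⟩
  rw [hold, hnew, card_image_of_injective _ fun _ _ h => Sym2.congr_right.mp h]
  rfl

lemma edgesIn_union {S T : Finset V} (h : Disjoint S T) :
    edgesIn G (S ∪ T) = edgesIn G S + edgesIn G T + ∑ u ∈ S, degIn G T u := by
  induction S using Finset.induction_on with
  | empty => simp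
  | insert a S ha ih =>
    obtain ⟨haT, hST⟩ := disjoint_insert_left.mp h
    rw [insert_union, edgesIn_insert G (by simp [ha, haT]), ih hST, edgesIn_insert G ha,
      degIn_union G hST, sum_insert ha]
    ring

lemma sum_degIn_self (S : Finset V) : ∑ v ∈ S, degIn G S v = 2 * edgesIn G S := by
  induction S using Finset.induction_on with
  | empty => simp
  | insert a S ha ih =>
    have hback : ∑ v ∈ S, (if G.Adj v a then 1 else 0) = degIn G S a := by
      rw [← card_filter, degIn]
      simp [G.adj_comm]
    rw [sum_insert ha, degIn_insert_self, edgesIn_insert G ha,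
      sum_congr rfl fun v _ => degIn_insert_of_notMem G ha v, sum_add_distrib, ih, hback]
    ring

end EdgeCount

section Sparse

def excess (S : Finset V) : ℤ := edgesIn G S - S.card

@[simp]
lemma excess_empty : excess G ∅ = 0 := by
  simp [excess]

lemma excess_insert {S : Finset V} {a : V} (ha : a ∉ S) :
    excess G (insert a S) = excess G S + degIn G S a - 1 := by
  rw [excess, excess, edgesIn_insert G ha, card_insert_of_notMem ha]
  push_cast
  ring

lemma excess_erase {S : Finset V} {a : V} (ha : a ∈ S) :
    excess G S = excess G (S.erase a) + degIn G S a - 1 := by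
  conv_lhs => rw [← insert_erase ha]
  rw [excess_insert G (notMem_erase a S), degIn_erase_self]

lemma excess_singleton (v : V) : excess G {v} = -1 := by
  rw [← insert_empty, excess_insert G (notMem_empty v)]
  simp

lemma excess_union {S T : Finset V} (h : Disjoint S T) :
    excess G (S ∪ T) = excess G S + excess G T + ∑ u ∈ S, (degIn G T u : ℤ) := by
  rw [excess, excess, excess, edgesIn_union G h, card_union_of_disjoint h]
  push_cast
  ring

def IsSparse (A : Finset V) : Prop := ∀ T ⊆ A, excess G T ≤ 0

variable {G} in
lemma IsSparse.anti {A B : Finset V} (hA : IsSparse G A) (hBA : B ⊆ A) : IsSparse G B :=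
  fun T hT => hA T (hT.trans hBA)

lemma exists_subset_excess_pos_two_le_degIn {T : Finset V} (hT : 0 < excess G T) :
    ∃ T' ⊆ T, 0 < excess G T' ∧ ∀ v ∈ T', 2 ≤ degIn G T' v := by
  induction T using Finset.strongInduction with
  | H T ih =>
    by_cases hdeg : ∀ v ∈ T, 2 ≤ degIn G T v
    · exact ⟨T, subset_rfl, hT, hdeg⟩
    push Not at hdeg
    obtain ⟨v, hv, hlt⟩ := hdeg
    have hpos : 0 < excess G (T.erase v) := by
      rw [excess_erase G hv] at hT
      omega
    obtain ⟨T', hT', h⟩ := ih (T.erase v) (erase_ssubset hv) hpos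
    exact ⟨T', hT'.trans (erase_subset v T), h⟩

lemma exists_violator_of_not_isSparse {A : Finset V} (hA : ¬ IsSparse G A) :
    ∃ T ⊆ A, 0 < excess G T ∧ ∀ v ∈ T, 2 ≤ degIn G T v := by
  simp only [IsSparse, not_forall, not_le] at hA
  obtain ⟨T, hTA, hT⟩ := hA
  obtain ⟨T', hT', h⟩ := exists_subset_excess_pos_two_le_degIn G hT
  exact ⟨T', hT'.trans hTA, h⟩

def twoCore (A : Finset V) : Finset V :=
  (A.powerset.filter fun B => ∀ v ∈ B, 2 ≤ degIn G B v).sup id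

lemma twoCore_subset (A : Finset V) : twoCore G A ⊆ A := by
  intro v hv
  obtain ⟨B, hB, hvB⟩ := mem_sup.mp hv
  exact mem_powerset.mp (mem_filter.mp hB).1 hvB

lemma subset_twoCore {A B : Finset V} (hBA : B ⊆ A) (h : ∀ v ∈ B, 2 ≤ degIn G B v) :
    B ⊆ twoCore G A :=
  fun _ hv => mem_sup.mpr ⟨B, mem_filter.mpr ⟨mem_powerset.mpr hBA, h⟩, hv⟩

lemma two_le_degIn_twoCore (A : Finset V) : ∀ v ∈ twoCore G A, 2 ≤ degIn G (twoCore G A) v := by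
  intro v hv
  obtain ⟨B, hB, hvB⟩ := mem_sup.mp hv
  obtain ⟨hBA, hdeg⟩ := mem_filter.mp hB
  exact (hdeg v hvB).trans (degIn_mono G (subset_twoCore G (mem_powerset.mp hBA) hdeg) v)

lemma not_isSparse_inter_twoCore {A S : Finset V} (hSA : S ⊆ A) (hS : ¬ IsSparse G S) :
    ¬ IsSparse G (S ∩ twoCore G A) := by
  obtain ⟨T, hTS, hT, hdeg⟩ := exists_violator_of_not_isSparse G hS
  exact fun h => (h T (subset_inter hTS (subset_twoCore G (hTS.trans hSA) hdeg))).not_gt hT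

lemma card_edges_le_edgesIn_map {W : Type*} [Fintype W] {H : SimpleGraph W} (f : H ↪g G)
    (S : Finset W) :
    (H.edgeFinset.filter fun e => ∀ v ∈ e, v ∈ S).card ≤ edgesIn G (S.map f.toEmbedding) := by
  refine card_le_card_of_injOn (Sym2.map f) (fun e he => ?_)
    (fun _ _ _ _ h => Sym2.map.injective f.injective h)
  induction e with
  | _ a b =>
    simp only [coe_filter, Set.mem_ofPred_eq, SimpleGraph.mem_edgeFinset, SimpleGraph.mem_edgeSet,
      Sym2.mem_iff, forall_eq_or_imp, forall_eq] at he
    simp only [Sym2.map_mk, coe_filter, Set.mem_ofPred_eq, SimpleGraph.mem_edgeFinset,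
      SimpleGraph.mem_edgeSet, Sym2.mem_iff, forall_eq_or_imp, forall_eq, mem_map]
    exact ⟨f.map_adj_iff.mpr he.1, ⟨a, he.2.1, rfl⟩, ⟨b, he.2.2, rfl⟩⟩

lemma isPFDS_of_isSparse {U : Finset V} (h : IsSparse G (univ \ U)) : IsPFDS G U := by
  intro C
  set S := univ.filter fun v => (G.induce {v | v ∉ U}).connectedComponentMk v = C
  set f : G.induce {v | v ∉ U} ↪g G := SimpleGraph.Embedding.induce _
  have hS : S.map f.toEmbedding ⊆ univ \ U := by
    intro v hv
    obtain ⟨w, -, rfl⟩ := mem_map.mp hv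
    exact mem_sdiff.mpr ⟨mem_univ _, w.2⟩
  have hsparse := h _ hS
  rw [excess, card_map] at hsparse
  calc _ = (_ : Finset _).card := by simp [S]
    _ ≤ _ := card_edges_le_edgesIn_map G f S
    _ ≤ S.card := by omega

end Sparse

section Components

def restrictTo (R : Finset V) : SimpleGraph V where
  Adj a b := G.Adj a b ∧ a ∈ R ∧ b ∈ R
  symm := ⟨fun _ _ h => ⟨h.1.symm, h.2.2, h.2.1⟩⟩
  loopless := ⟨fun a h => G.loopless.irrefl a h.1⟩

def compOf (R : Finset V) (v : V) : Finset V :=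
  R.filter fun w => (restrictTo G R).Reachable v w

def comps (R : Finset V) : Finset (Finset V) := R.image (compOf G R)

variable {G} {R C : Finset V}

lemma mem_compOf_self {v : V} (hv : v ∈ R) : v ∈ compOf G R v :=
  mem_filter.mpr ⟨hv, .refl v⟩

lemma compOf_eq_of_mem {v w : V} (hw : w ∈ compOf G R v) : compOf G R w = compOf G R v := by
  obtain ⟨-, hvw⟩ := mem_filter.mp hw
  ext z
  simp only [compOf, mem_filter]
  exact and_congr_right fun _ => ⟨hvw.trans, hvw.symm.trans⟩

lemma mem_comps_iff (hC : C ∈ comps G R) {v : V} (hv : v ∈ R) : v ∈ C ↔ compOf G R v = C := by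
  obtain ⟨r, -, rfl⟩ := mem_image.mp hC
  exact ⟨compOf_eq_of_mem, fun h => h ▸ mem_compOf_self hv⟩

lemma subset_of_mem_comps (hC : C ∈ comps G R) : C ⊆ R := by
  obtain ⟨r, -, rfl⟩ := mem_image.mp hC
  exact filter_subset _ _

lemma nonempty_of_mem_comps (hC : C ∈ comps G R) : C.Nonempty := by
  obtain ⟨r, hr, rfl⟩ := mem_image.mp hC
  exact ⟨r, mem_compOf_self hr⟩

lemma mem_comps_of_adj (hC : C ∈ comps G R) {v w : V} (hv : v ∈ C) (hvw : G.Adj v w)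
    (hw : w ∈ R) : w ∈ C := by
  have hvR := subset_of_mem_comps hC hv
  rw [mem_comps_iff hC hvR] at hv
  rw [mem_comps_iff hC hw, ← hv]
  exact compOf_eq_of_mem (mem_filter.mpr ⟨hw, SimpleGraph.Adj.reachable ⟨hvw, hvR, hw⟩⟩)

lemma reachable_of_mem_comps (hC : C ∈ comps G R) {v w : V} (hv : v ∈ C) (hw : w ∈ C) :
    (restrictTo G R).Reachable v w := by
  obtain ⟨r, -, rfl⟩ := mem_image.mp hC
  exact (mem_filter.mp hv).2.symm.trans (mem_filter.mp hw).2

lemma degIn_inter_comps (hC : C ∈ comps G R) {t : Finset V} (ht : t ⊆ R) {v : V} (hv : v ∈ C) :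
    degIn G (t ∩ C) v = degIn G t v := by
  rw [degIn, degIn, ← filter_inter, inter_eq_left.mpr]
  exact fun w hw => mem_comps_of_adj hC hv (mem_filter.mp hw).2 (ht (mem_filter.mp hw).1)

lemma sum_sum_inter_comps {M : Type*} [AddCommMonoid M] {t : Finset V} (ht : t ⊆ R) (f : V → M) :
    ∑ C ∈ comps G R, ∑ v ∈ t ∩ C, f v = ∑ v ∈ t, f v := by
  rw [← sum_fiberwise_of_maps_to (g := compOf G R) (t := comps G R)
    fun v hv => mem_image_of_mem _ (ht hv)]
  refine sum_congr rfl fun C hC => sum_congr ?_ fun _ _ => rfl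
  ext v
  simp only [mem_inter, mem_filter]
  exact and_congr_right fun hv => mem_comps_iff hC (ht hv)

lemma sum_card_inter_comps {t : Finset V} (ht : t ⊆ R) :
    ∑ C ∈ comps G R, (t ∩ C).card = t.card := by
  simp only [card_eq_sum_ones]
  exact sum_sum_inter_comps (G := G) ht _

lemma sum_degIn_inter_comps {t : Finset V} (ht : t ⊆ R) (u : V) :
    ∑ C ∈ comps G R, degIn G (t ∩ C) u = degIn G t u := by
  simp_rw [degIn, ← filter_inter]
  exact sum_card_inter_comps ((filter_subset _ _).trans ht)

lemma sum_edgesIn_inter_comps {t : Finset V} (ht : t ⊆ R) :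
    ∑ C ∈ comps G R, edgesIn G (t ∩ C) = edgesIn G t := by
  have hdouble : ∑ C ∈ comps G R, 2 * edgesIn G (t ∩ C) = 2 * edgesIn G t := by
    simp_rw [← sum_degIn_self]
    rw [← sum_sum_inter_comps ht]
    exact sum_congr rfl fun C hC => sum_congr rfl fun v hv =>
      degIn_inter_comps hC ht (mem_inter.mp hv).2
  rw [← mul_sum] at hdouble
  omega

lemma sum_excess_inter_comps {t : Finset V} (ht : t ⊆ R) :
    ∑ C ∈ comps G R, excess G (t ∩ C) = excess G t := by
  simp only [excess, sum_sub_distrib]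
  rw [← sum_edgesIn_inter_comps ht, ← sum_card_inter_comps (G := G) ht]
  push_cast
  rfl

lemma exists_adj_of_ssubset_comps (hC : C ∈ comps G R) {t : Finset V} (htC : t ⊂ C)
    (ht : t.Nonempty) : ∃ a ∈ t, ∃ b ∈ C, b ∉ t ∧ G.Adj a b := by
  obtain ⟨p, hp⟩ := ht
  obtain ⟨v, hvC, hvt⟩ := exists_of_ssubset htC
  obtain ⟨w⟩ := reachable_of_mem_comps hC (htC.subset hp) hvC
  obtain ⟨d, -, hd, hd'⟩ := w.exists_boundary_dart t hp hvt
  obtain ⟨hadj, -, hR⟩ := d.adj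
  exact ⟨d.fst, hd, d.snd, mem_comps_of_adj hC (htC.subset hd) hadj hR, hd', hadj⟩

/-- Connectivity: a component can be grown from any nonempty part one adjacent vertex at a time,
and each step does not decrease the excess. -/
lemma excess_le_of_mem_comps (hC : C ∈ comps G R) {t : Finset V} (htC : t ⊆ C)
    (ht : t.Nonempty) : excess G t ≤ excess G C := by
  obtain ⟨k, hk⟩ : ∃ k, (C \ t).card = k := ⟨_, rfl⟩
  induction k generalizing t with
  | zero => rw [htC.antisymm (sdiff_eq_empty_iff_subset.mp (card_eq_zero.mp hk))]
  | succ k ih =>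
    have hne : t ≠ C := by
      rintro rfl
      simp at hk
    obtain ⟨a, ha, b, hbC, hbt, hab⟩ := exists_adj_of_ssubset_comps hC (htC.ssubset_of_ne hne) ht
    have hdeg : 0 < degIn G t b := card_pos.mpr ⟨a, mem_filter.mpr ⟨ha, hab.symm⟩⟩
    calc excess G t ≤ excess G (insert b t) := by
          rw [excess_insert G hbt]
          omega
      _ ≤ excess G C := by
          refine ih (insert_subset hbC htC) (insert_nonempty b t) ?_
          rw [sdiff_insert, card_erase_of_mem (mem_sdiff.mpr ⟨hbC, hbt⟩), hk]
          rfl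

lemma sum_excess_comps (R : Finset V) : ∑ C ∈ comps G R, excess G C = excess G R := by
  rw [← sum_excess_inter_comps (subset_refl R)]
  exact sum_congr rfl fun C hC => by rw [inter_eq_right.mpr (subset_of_mem_comps hC)]

lemma sum_degIn_comps (R : Finset V) (u : V) :
    ∑ C ∈ comps G R, degIn G C u = degIn G R u := by
  rw [← sum_degIn_inter_comps (subset_refl R)]
  exact sum_congr rfl fun C hC => by rw [inter_eq_right.mpr (subset_of_mem_comps hC)]

lemma neg_sum_ite_le_excess (R : Finset V) :
    -∑ C ∈ comps G R, (if excess G C < 0 then 1 else 0) ≤ excess G R := by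
  rw [← sum_excess_comps, ← sum_neg_distrib]
  refine sum_le_sum fun C hC => ?_
  obtain ⟨v, hv⟩ := nonempty_of_mem_comps hC
  have := excess_le_of_mem_comps hC (singleton_subset_iff.mpr hv) (singleton_nonempty v)
  rw [excess_singleton] at this
  split_ifs <;> omega

lemma excess_inter_add_degIn_le (hR : IsSparse G R) (hC : C ∈ comps G R) (t : Finset V)
    (u : V) :
    excess G (t ∩ C) + degIn G (t ∩ C) u + (if excess G C < 0 ∧ 0 < degIn G C u then 1 else 0)
      ≤ degIn G C u := by
  have hle : (if excess G C < 0 ∧ 0 < degIn G C u then 1 else 0) ≤ (degIn G C u : ℤ) := by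
    split_ifs with h <;> omega
  rcases (t ∩ C).eq_empty_or_nonempty with hempty | hne
  · simpa [hempty] using hle
  have hexc := excess_le_of_mem_comps hC inter_subset_right hne
  have hdeg : degIn G (t ∩ C) u ≤ degIn G C u := degIn_mono G inter_subset_right u
  have hCR := hR C (subset_of_mem_comps hC)
  split_ifs with h <;> omega

/-- A dense `T ⊆ insert u R` contains `u` and has `excess (T \ {u}) + d_{T \ {u}}(u) ≥ 2`;
split this over the components of `G[R]`, each of excess at most `0`, and `-1` for trees. -/
lemma two_add_sum_ite_le_degIn (hR : IsSparse G R) {u : V}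
    (hins : ¬ IsSparse G (insert u R)) :
    2 + ∑ C ∈ comps G R, (if excess G C < 0 ∧ 0 < degIn G C u then 1 else 0)
      ≤ (degIn G R u : ℤ) := by
  simp only [IsSparse, not_forall, not_le] at hins
  obtain ⟨T, hTR, hT⟩ := hins
  have huT : u ∈ T := by
    by_contra huT
    exact (hR T fun v hv => (mem_insert.mp (hTR hv)).resolve_left (by rintro rfl; exact huT hv)
      ).not_gt hT
  have htR : T.erase u ⊆ R := fun v hv =>
    (mem_insert.mp (hTR (mem_of_mem_erase hv))).resolve_left (ne_of_mem_erase hv)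
  rw [excess_erase G huT, ← degIn_erase_self, ← sum_excess_inter_comps htR,
    ← sum_degIn_inter_comps htR] at hT
  rw [← sum_degIn_comps]
  push_cast at hT ⊢
  have := sum_le_sum fun C (hC : C ∈ comps G R) => excess_inter_add_degIn_le hR hC (T.erase u) u
  rw [sum_add_distrib, sum_add_distrib] at this
  omega

end Components

section KeyBound

variable {G} {B U : Finset V}

lemma degIn_eq_add_of_subset (hUB : U ⊆ B) (v : V) :
    degIn G B v = degIn G U v + degIn G (B \ U) v := by
  rw [← degIn_union G disjoint_sdiff, union_sdiff_of_subset hUB]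

/-- `∑_{v ∈ C} d_B(v) ≥ 2|C|`, while `∑_{v ∈ C} d_C(v) = 2|E[C]| ≤ 2|C| - 2`. -/
lemma two_le_sum_degIn_of_excess_neg (hB : ∀ v ∈ B, 2 ≤ degIn G B v) (hUB : U ⊆ B) {C : Finset V}
    (hC : C ∈ comps G (B \ U)) (hexc : excess G C < 0) : 2 ≤ ∑ u ∈ U, degIn G C u := by
  have hCB : C ⊆ B := (subset_of_mem_comps hC).trans sdiff_subset
  have hsplit : ∀ v ∈ C, degIn G B v = degIn G U v + degIn G C v := fun v hv => by
    rw [degIn_eq_add_of_subset hUB, ← degIn_inter_comps hC subset_rfl hv,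
      inter_eq_right.mpr (subset_of_mem_comps hC)]
  have hmin : 2 * C.card ≤ ∑ v ∈ C, degIn G B v := by
    simpa [mul_comm] using card_nsmul_le_sum C _ 2 fun v hv => hB v (hCB hv)
  rw [sum_congr rfl hsplit, sum_add_distrib, sum_degIn_self, ← sum_degIn_comm] at hmin
  rw [excess] at hexc
  omega

lemma ite_le_sum_ite_pos_degIn (hB : ∀ v ∈ B, 2 ≤ degIn G B v) (hUB : U ⊆ B) {C : Finset V}
    (hC : C ∈ comps G (B \ U)) :
    (if excess G C < 0 then 1 else 0)
      ≤ ∑ u ∈ U, (if excess G C < 0 ∧ 0 < degIn G C u then (1 : ℤ) else 0) := by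
  split_ifs with hexc
  · obtain ⟨u, hu, hpos⟩ : ∃ u ∈ U, 0 < degIn G C u := by
      by_contra! h
      have := two_le_sum_degIn_of_excess_neg hB hUB hC hexc
      rw [sum_eq_zero fun u hu => Nat.le_zero.mp (h u hu)] at this
      omega
    calc (1 : ℤ) = if excess G C < 0 ∧ 0 < degIn G C u then 1 else 0 := by simp [hexc, hpos]
      _ ≤ _ := single_le_sum (f := fun u => if excess G C < 0 ∧ 0 < degIn G C u then (1 : ℤ) else 0)
          (fun _ _ => by positivity) hu
  · exact sum_nonneg fun _ _ => by positivity

/-- Let `τ` count the tree components (those of negative excess) of `G[B \ U]` and `X` the edges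
between `U` and `B \ U`. Each `u ∈ U` sends two edges into `B \ U` plus one per tree component
it touches, and each tree component receives two edges from `U`; so `X ≥ 2|U| + τ` and
`X ≥ 2τ`, which together with `excess (B \ U) ≥ -τ` give the bound. -/
theorem sum_degIn_sub_one_le_three_mul_excess (hB : ∀ v ∈ B, 2 ≤ degIn G B v) (hUB : U ⊆ B)
    (hR : IsSparse G (B \ U)) (hU : ∀ u ∈ U, ¬ IsSparse G (insert u (B \ U))) :
    ∑ u ∈ U, ((degIn G B u : ℤ) - 1) ≤ 3 * excess G B := by
  set R := B \ U
  set τ : ℤ := ∑ C ∈ comps G R, if excess G C < 0 then 1 else 0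
  set X : ℤ := ∑ u ∈ U, (degIn G R u : ℤ)
  have hτ : -τ ≤ excess G R := neg_sum_ite_le_excess R
  have hX₁ : 2 * U.card + τ ≤ X := by
    calc 2 * (U.card : ℤ) + τ ≤ ∑ u ∈ U, (2 + ∑ C ∈ comps G R,
          if excess G C < 0 ∧ 0 < degIn G C u then (1 : ℤ) else 0) := by
          rw [sum_add_distrib, sum_comm, sum_const, nsmul_eq_mul]
          have := sum_le_sum fun C (hC : C ∈ comps G R) => ite_le_sum_ite_pos_degIn hB hUB hC
          linarith
      _ ≤ X := sum_le_sum fun u hu => two_add_sum_ite_le_degIn hR (hU u hu)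
  have hX₂ : 2 * τ ≤ X := by
    calc 2 * τ = ∑ C ∈ comps G R, if excess G C < 0 then 2 else 0 := by
          rw [mul_sum]
          exact sum_congr rfl fun C _ => by split_ifs <;> rfl
      _ ≤ ∑ C ∈ comps G R, ∑ u ∈ U, (degIn G C u : ℤ) := by
          refine sum_le_sum fun C hC => ?_
          split_ifs with hexc
          · exact_mod_cast two_le_sum_degIn_of_excess_neg hB hUB hC hexc
          · positivity
      _ = X := by
          rw [sum_comm]
          exact sum_congr rfl fun u _ => by exact_mod_cast sum_degIn_comps R u
  have hexcB : excess G B = excess G U + excess G R + X := by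
    rw [← excess_union G disjoint_sdiff, union_sdiff_of_subset hUB]
  have hdegB : ∑ u ∈ U, ((degIn G B u : ℤ) - 1) = 2 * edgesIn G U + X - U.card := by
    have hU2 : ∑ u ∈ U, (degIn G U u : ℤ) = 2 * edgesIn G U := by
      exact_mod_cast sum_degIn_self G U
    simp only [degIn_eq_add_of_subset hUB, Nat.cast_add, sum_sub_distrib, sum_add_distrib, hU2]
    simp [X, R]
  rw [hdegB, hexcB, excess]
  linarith

end KeyBound

section LocalRatio

def IsMinimalDeletion (A U : Finset V) : Prop :=
  U ⊆ A ∧ IsSparse G (A \ U) ∧ ∀ u ∈ U, ¬ IsSparse G (insert u (A \ U))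

lemma exists_isMinimalDeletion_subset {A U : Finset V} (hUA : U ⊆ A) (hU : IsSparse G (A \ U)) :
    ∃ U' ⊆ U, IsMinimalDeletion G A U' := by
  induction U using Finset.strongInduction with
  | H U ih =>
    by_cases hmin : ∀ u ∈ U, ¬ IsSparse G (insert u (A \ U))
    · exact ⟨U, subset_rfl, hUA, hU, hmin⟩
    push Not at hmin
    obtain ⟨u, hu, hsparse⟩ := hmin
    rw [← sdiff_erase (hUA hu)] at hsparse
    obtain ⟨U', hU', h⟩ := ih (U.erase u) (erase_ssubset hu) ((erase_subset u U).trans hUA) hsparse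
    exact ⟨U', hU'.trans (erase_subset u U), h⟩

lemma twoCore_nonempty {A : Finset V} (hA : ¬ IsSparse G A) : (twoCore G A).Nonempty := by
  obtain ⟨T, hTA, hT, hdeg⟩ := exists_violator_of_not_isSparse G hA
  obtain ⟨v, hv⟩ : T.Nonempty := nonempty_iff_ne_empty.mpr (by rintro rfl; simp at hT)
  exact ⟨v, subset_twoCore G hTA hdeg hv⟩

lemma rowWD_twoCore_nonneg (A : Finset V) (u : V) : 0 ≤ rowWD G (twoCore G A) u := by
  unfold rowWD
  split_ifs with hu
  · have : (2 : ℝ) ≤ degIn G (twoCore G A) u := by exact_mod_cast two_le_degIn_twoCore G A u hu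
    linarith
  · rfl

lemma rowWD_twoCore_pos {A : Finset V} {u : V} (hu : u ∈ twoCore G A) :
    0 < rowWD G (twoCore G A) u := by
  have : (2 : ℝ) ≤ degIn G (twoCore G A) u := by exact_mod_cast two_le_degIn_twoCore G A u hu
  rw [rowWD, if_pos hu]
  linarith

lemma mem_of_rowWD_pos {S : Finset V} {u : V} (h : 0 < rowWD G S u) : u ∈ S := by
  by_contra hu
  simp [rowWD, hu] at h

/-- A minimal dense set has minimum degree two, so it lies in the `2`-core `B`; hence `U ∩ B` is
still a minimal deletion set for `B`. -/
theorem sum_rowWD_twoCore_le {x : V → ℝ} (hx : PWD G x) {A U : Finset V}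
    (hU : IsMinimalDeletion G A U) :
    ∑ u ∈ U, rowWD G (twoCore G A) u ≤ 3 * ∑ u ∈ A, rowWD G (twoCore G A) u * x u := by
  obtain ⟨hUA, hsparse, hmin⟩ := hU
  set B := twoCore G A
  have hBA : B ⊆ A := twoCore_subset G A
  have hdiff : B \ (U ∩ B) = B \ U := sdiff_inter_self_right B U
  have hsparseB : IsSparse G (B \ (U ∩ B)) := by
    rw [hdiff]
    exact hsparse.anti (sdiff_subset_sdiff hBA subset_rfl)
  have hminB : ∀ u ∈ U ∩ B, ¬ IsSparse G (insert u (B \ (U ∩ B))) := by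
    intro u hu h
    obtain ⟨huU, huB⟩ := mem_inter.mp hu
    refine not_isSparse_inter_twoCore G (insert_subset (hUA huU) sdiff_subset) (hmin u huU)
      (h.anti fun v hv => ?_)
    rw [hdiff]
    simp only [mem_inter, mem_insert, mem_sdiff] at hv ⊢
    tauto
  have hkey : ((∑ u ∈ U ∩ B, ((degIn G B u : ℤ) - 1) : ℤ) : ℝ) ≤ ((3 * excess G B : ℤ) : ℝ) :=
    Int.cast_le.mpr
      (sum_degIn_sub_one_le_three_mul_excess (two_le_degIn_twoCore G A) inter_subset_right
        hsparseB hminB)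
  push_cast [excess] at hkey
  calc ∑ u ∈ U, rowWD G B u = ∑ u ∈ U ∩ B, ((degIn G B u : ℝ) - 1) := by
        simp only [rowWD, sum_ite_mem]
    _ ≤ 3 * ((edgesIn G B : ℝ) - B.card) := hkey
    _ ≤ 3 * ∑ u ∈ B, ((degIn G B u : ℝ) - 1) * x u := by linarith [hx.2 B]
    _ = 3 * ∑ u ∈ A, rowWD G B u * x u := by
        simp only [rowWD, ite_mul, zero_mul, sum_ite_mem, inter_eq_right.mpr hBA]

lemma exists_max_scaling {ι : Type*} [Fintype ι] (c w : ι → ℝ) (hc : ∀ i, 0 ≤ c i)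
    (hw : ∀ i, 0 ≤ w i) (hpos : ∃ i, 0 < w i) :
    ∃ i₀, 0 < w i₀ ∧ ∃ ε, 0 ≤ ε ∧ ε * w i₀ = c i₀ ∧ ∀ i, ε * w i ≤ c i := by
  obtain ⟨i₀, hi₀, hmin⟩ := exists_min_image (univ.filter fun i => 0 < w i) (fun i => c i / w i)
    (by simpa [Finset.Nonempty] using hpos)
  have hwi₀ : 0 < w i₀ := (mem_filter.mp hi₀).2
  refine ⟨i₀, hwi₀, c i₀ / w i₀, div_nonneg (hc i₀) hwi₀.le, div_mul_cancel₀ _ hwi₀.ne', fun i => ?_⟩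
  rcases (hw i).eq_or_lt with hwi | hwi
  · simpa [← hwi] using hc i
  · exact (le_div_iff₀ hwi).mp (hmin i (mem_filter.mpr ⟨mem_univ i, hwi⟩))

variable {G} in
theorem exists_isMinimalDeletion_sum_le {x : V → ℝ} (hx : PWD G x) (A : Finset V) (c : V → ℝ)
    (hc : ∀ u, 0 ≤ c u) :
    ∃ U, IsMinimalDeletion G A U ∧ ∑ u ∈ U, c u ≤ 3 * ∑ u ∈ A, c u * x u := by
  induction A using Finset.strongInduction generalizing c with
  | H A ih =>
  by_cases hA : IsSparse G A
  · refine ⟨∅, ⟨empty_subset A, by simpa using hA, by simp⟩, ?_⟩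
    simpa using sum_nonneg fun u _ => mul_nonneg (hc u) (hx.1 u)
  set w := rowWD G (twoCore G A)
  obtain ⟨u₀, hwu₀, ε, hε, hεu₀, hεc⟩ := exists_max_scaling c w hc (rowWD_twoCore_nonneg G A)
    (let ⟨v, hv⟩ := twoCore_nonempty G hA; ⟨v, rowWD_twoCore_pos G hv⟩)
  have hu₀A : u₀ ∈ A := twoCore_subset G A (mem_of_rowWD_pos G hwu₀)
  set c' := fun v => c v - ε * w v
  have hc' : ∀ v, 0 ≤ c' v := fun v => sub_nonneg.mpr (hεc v)
  obtain ⟨U', ⟨hU'A, hU'sparse, -⟩, hcost'⟩ := ih (A.erase u₀) (erase_ssubset hu₀A) c' hc'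
  obtain ⟨U, hUsub, hU⟩ := exists_isMinimalDeletion_subset G
    (insert_subset hu₀A (hU'A.trans (erase_subset u₀ A)))
    (by rw [sdiff_insert, ← erase_sdiff_comm]; exact hU'sparse)
  refine ⟨U, hU, ?_⟩
  have hcx : ∀ v, 0 ≤ c' v * x v := fun v => mul_nonneg (hc' v) (hx.1 v)
  calc ∑ u ∈ U, c u = ∑ u ∈ U, c' u + ε * ∑ u ∈ U, w u := by
        simp [c', mul_sum]
    _ ≤ ∑ u ∈ insert u₀ U', c' u + ε * (3 * ∑ u ∈ A, w u * x u) := by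
        gcongr
        · exact fun v _ _ => hc' v
        · exact sum_rowWD_twoCore_le G hx hU
    _ = ∑ u ∈ U', c' u + ε * (3 * ∑ u ∈ A, w u * x u) := by
        rw [sum_insert_zero (by simp [c', hεu₀])]
    _ ≤ 3 * ∑ u ∈ A, c' u * x u + ε * (3 * ∑ u ∈ A, w u * x u) := by
        have hsub := sum_le_sum_of_subset_of_nonneg (erase_subset u₀ A) fun v _ _ => hcx v
        linarith
    _ = 3 * ∑ u ∈ A, c u * x u := by
        have hsplit : ∑ u ∈ A, c' u * x u = ∑ u ∈ A, c u * x u - ε * ∑ u ∈ A, w u * x u := by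
          simp only [c', sub_mul, sum_sub_distrib, mul_sum, mul_assoc]
        rw [hsplit]
        ring

end LocalRatio

end

/-- the integrality gap of the LP relaxation
`min {Σ c_u x_u : x ∈ P_WD(G)}` of PFDS is at most `3`: for every `x ∈ P_WD(G)` there
is a pseudoforest deletion set `U` with `Σ_{u ∈ U} c(u) ≤ 3 Σ_{u ∈ V} c(u) x_u`. -/
theorem stmt_13 {V : Type*} [Fintype V] (G : SimpleGraph V)
    (c : V → ℝ) (hc : ∀ u, 0 ≤ c u) (x : V → ℝ) (hx : PWD G x) :
    ∃ U : Finset V, IsPFDS G U ∧ ∑ u ∈ U, c u ≤ 3 * ∑ u, c u * x u := by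
  obtain ⟨U, ⟨-, hU, -⟩, hcost⟩ := exists_isMinimalDeletion_sum_le hx univ c hc
  exact ⟨U, isPFDS_of_isSparse G hU, hcost⟩
end FVS
end

section
/- Let G=(V,E) be a finite undirected connected graph with minimum degree at least 2 that contains a 2-pseudotree as a subgraph, and let x ∈ P_WD(G) satisfy x_u < 1/3 for all u ∈ V. Then there exist two distinct vertices u, v ∈ V such that x_u > 0 and x_v > 0. -/
/- Common definitions for the polyhedral study of FVS / PFDS. -/

open scoped Classical
open Finset

/-!
Take `S` minimal with `|E[S]| ≥ |S| + 1` and put `t = |E[S]| - |S| ≥ 1`. Deleting a vertex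
`v` of `S` must destroy the excess, so `d_S(v) ≥ t + 1`; handshaking over `S` then leaves at
most `3t + 1` for any single degree. Hence each term `(d_S(u) - 1) x_u` of the constraint
for `S` is below `t` when `x_u < 1/3`, and a constraint with at most one nonzero term
cannot reach `t`.
-/

namespace FVS

section InducedCounts

variable {V : Type*} [Fintype V] (G : SimpleGraph V) (S : Finset V)

lemma edgeFinset_spanningCoe_induce :
    ((⊤ : G.Subgraph).induce S).spanningCoe.edgeFinset =
      G.edgeFinset.filter fun e => ∀ v ∈ e, v ∈ S := by
  ext e
  induction e using Sym2.ind with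
  | _ a b => simp; tauto

lemma degree_spanningCoe_induce {v : V} (hv : v ∈ S) :
    ((⊤ : G.Subgraph).induce S).spanningCoe.degree v = degIn G S v := by
  rw [← SimpleGraph.card_neighborFinset_eq_degree, degIn]
  congr 1
  ext w
  simp [hv]

lemma degree_spanningCoe_induce_of_notMem {v : V} (hv : v ∉ S) :
    ((⊤ : G.Subgraph).induce S).spanningCoe.degree v = 0 := by
  rw [← SimpleGraph.card_neighborFinset_eq_degree, Finset.card_eq_zero,
    Finset.eq_empty_iff_forall_notMem]
  simp [hv]

theorem sum_degIn_eq_two_mul_edgesIn : ∑ v ∈ S, degIn G S v = 2 * edgesIn G S := by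
  set H := ((⊤ : G.Subgraph).induce S).spanningCoe
  calc ∑ v ∈ S, degIn G S v = ∑ v, H.degree v := by
        rw [Finset.sum_congr rfl fun v hv => (degree_spanningCoe_induce G S hv).symm]
        exact Finset.sum_subset (Finset.subset_univ S) fun v _ hv =>
          degree_spanningCoe_induce_of_notMem G S hv
    _ = 2 * edgesIn G S := by
        rw [H.sum_degrees_eq_twice_card_edges, edgesIn, edgeFinset_spanningCoe_induce]

theorem edgesIn_le_edgesIn_erase_add_degIn {v : V} (hv : v ∈ S) :
    edgesIn G S ≤ edgesIn G (S.erase v) + degIn G S v := by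
  set E := ((⊤ : G.Subgraph).induce S).spanningCoe.edgeFinset
  have hE : edgesIn G S = #E := by simp only [E, edgesIn, edgeFinset_spanningCoe_induce]
  have h_off : #(E.filter (v ∉ ·)) ≤ edgesIn G (S.erase v) := by
    refine Finset.card_le_card fun e he => ?_
    simp only [E, edgeFinset_spanningCoe_induce, Finset.mem_filter] at he ⊢
    exact ⟨he.1.1, fun w hw => Finset.mem_erase.2 ⟨by rintro rfl; exact he.2 hw, he.1.2 w hw⟩⟩
  have h_at : #(E.filter (v ∈ ·)) = degIn G S v := by
    rw [← degree_spanningCoe_induce G S hv, ← SimpleGraph.card_incidenceFinset_eq_degree,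
      SimpleGraph.incidenceFinset_eq_filter]
  have h_split := Finset.card_filter_add_card_filter_not (s := E) (v ∈ ·)
  omega

theorem ncard_edgeSet_le_edgesIn_verts {G : SimpleGraph V} (H : G.Subgraph) :
    H.edgeSet.ncard ≤ edgesIn G H.verts.toFinset := by
  rw [Set.ncard_eq_toFinset_card']
  refine Finset.card_le_card fun e he => ?_
  rw [Set.mem_toFinset] at he
  simp only [Finset.mem_filter, SimpleGraph.mem_edgeFinset, Set.mem_toFinset]
  exact ⟨H.edgeSet_subset he, fun v hv => H.mem_verts_of_mem_edge he hv⟩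

end InducedCounts

def HasExcessEdges {V : Type*} [Fintype V] (G : SimpleGraph V) (T : Finset V) : Prop :=
  #T + 1 ≤ edgesIn G T

section MinimalDense

variable {V : Type*} [Fintype V] {G : SimpleGraph V} {S : Finset V} {u : V}

theorem edgesIn_add_one_le_card_add_degIn
    (hS : Minimal (HasExcessEdges G) S) (hu : u ∈ S) :
    edgesIn G S + 1 ≤ #S + degIn G S u := by
  have h_erase : ¬ HasExcessEdges G (S.erase u) :=
    hS.not_prop_of_lt (Finset.erase_ssubset hu)
  have h_remove := edgesIn_le_edgesIn_erase_add_degIn G S hu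
  rw [HasExcessEdges, Finset.card_erase_of_mem hu] at h_erase
  have := Finset.card_pos.2 ⟨u, hu⟩
  omega

theorem three_mul_card_add_degIn_le
    (hS : Minimal (HasExcessEdges G) S) (hu : u ∈ S) :
    3 * #S + degIn G S u ≤ 3 * edgesIn G S + 1 := by
  have h_sum := sum_degIn_eq_two_mul_edgesIn G S
  rw [← Finset.add_sum_erase S _ hu] at h_sum
  obtain ⟨s, hs⟩ : ∃ s, #S = s + 1 := Nat.exists_eq_add_of_le' (Finset.card_pos.2 ⟨u, hu⟩)
  obtain ⟨t, ht⟩ : ∃ t, edgesIn G S = #S + 1 + t := Nat.exists_eq_add_of_le hS.prop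
  have h_others : s * (t + 2) ≤ ∑ v ∈ S.erase u, degIn G S v := by
    have := Finset.card_nsmul_le_sum (S.erase u) (degIn G S) (t + 2) fun v hv =>
      by have := edgesIn_add_one_le_card_add_degIn hS (Finset.mem_of_mem_erase hv); omega
    rwa [Finset.card_erase_of_mem hu, hs, smul_eq_mul] at this
  rw [ht, hs] at h_sum ⊢
  nlinarith

theorem degIn_sub_one_mul_lt_of_minimal
    (hS : Minimal (HasExcessEdges G) S) (hu : u ∈ S)
    {x : V → ℝ} (hx_nonneg : 0 ≤ x u) (hx_lt : x u < 1 / 3) :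
    ((degIn G S u : ℝ) - 1) * x u < edgesIn G S - #S := by
  have h_low : (edgesIn G S + 1 : ℝ) ≤ #S + degIn G S u := by
    exact_mod_cast edgesIn_add_one_le_card_add_degIn hS hu
  have h_high : (3 * #S + degIn G S u : ℝ) ≤ 3 * edgesIn G S + 1 := by
    exact_mod_cast three_mul_card_add_degIn_le hS hu
  have hS_excess : (#S + 1 : ℝ) ≤ edgesIn G S := by exact_mod_cast hS.prop
  nlinarith

end MinimalDense

theorem stmt_19_general {V : Type*} [Fintype V] (G : SimpleGraph V)
    (h2pt : ∃ H : G.Subgraph, H.Connected ∧ H.verts.ncard + 1 ≤ H.edgeSet.ncard)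
    (x : V → ℝ) (hx : PWD G x) (hlt : ∀ u, x u < 1 / 3) :
    ∃ u v : V, u ≠ v ∧ 0 < x u ∧ 0 < x v := by
  obtain ⟨H, -, hH⟩ := h2pt
  have h_dense : HasExcessEdges G H.verts.toFinset := by
    rw [HasExcessEdges, ← Set.ncard_eq_toFinset_card']
    exact hH.trans (ncard_edgeSet_le_edgesIn_verts H)
  obtain ⟨S, hS⟩ := exists_minimal_of_wellFoundedLT (HasExcessEdges G) ⟨_, h_dense⟩
  by_contra! h_single
  have h_constraint := hx.2 S
  by_cases h_pos : ∃ u ∈ S, 0 < x u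
  · obtain ⟨u, hu, hxu⟩ := h_pos
    rw [Finset.sum_eq_single_of_mem u hu fun v _ hvu => by
      rw [le_antisymm (h_single u v hvu.symm hxu) (hx.1 v), mul_zero]] at h_constraint
    linarith [degIn_sub_one_mul_lt_of_minimal hS hu (hx.1 u) (hlt u)]
  · push Not at h_pos
    rw [Finset.sum_eq_zero fun v hv => by rw [le_antisymm (h_pos v hv) (hx.1 v), mul_zero]]
      at h_constraint
    have hS_excess : (#S + 1 : ℝ) ≤ edgesIn G S := by exact_mod_cast hS.prop
    linarith

/-- let `G` be a connected graph with minimum degree at least `2` that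
contains a `2`-pseudotree as a subgraph, and let `x ∈ P_WD(G)` with `x_u < 1/3` for
all `u`.  Then there are two distinct vertices `u, v` with `x_u > 0` and `x_v > 0`. -/
theorem stmt_19 {V : Type*} [Fintype V] (G : SimpleGraph V)
    (hconn : G.Connected) (hdeg : ∀ v, 2 ≤ G.degree v)
    (h2pt : ∃ H : G.Subgraph, H.Connected ∧ H.verts.ncard + 1 ≤ H.edgeSet.ncard)
    (x : V → ℝ) (hx : PWD G x) (hlt : ∀ u, x u < 1 / 3) :
    ∃ u v : V, u ≠ v ∧ 0 < x u ∧ 0 < x v :=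
  stmt_19_general G h2pt x hx hlt

end FVS
end
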